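/- (Graphical representation of the group inverse) Let L be the backward generator of an irreducible Markov jump process on n states and let L^# be its group inverse, i.e. the unique matrix X with LXL = L, XLX = X and LX = XL. Then for all x, y ∈ K: L^#_{x,y} = −w(ℱ^{x→y})/W + ρ^s(y) · w(ℱ)/W, where w(ℱ^{x→y}) is the total weight of rooted spanning two-tree forests in which x and y lie in the same tree rooted at y, w(ℱ) is the total weight of all rooted spanning two-tree forests, and W is the total weight of all rooted spanning trees. -/

import Mathlib

open scoped Classical

/-- The backward generator `L` of the Markov jump process with rates `k`:
`L x y = k x y` for `x ≠ y` and `L x x = -∑_{z ≠ x} k x z`. -/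
noncomputable def gen {K : Type*} [Fintype K] [DecidableEq K] (k : K → K → ℝ) :
    Matrix K K ℝ :=
  Matrix.of fun x y => if x = y then -∑ z ∈ Finset.univ.erase x, k x z else k x y

/-- Strong connectivity (irreducibility) of the digraph with an arc `(x,y)` whenever
`k x y > 0`. -/
def StronglyConnected {K : Type*} (k : K → K → ℝ) : Prop :=
  ∀ x y : K, Relation.ReflTransGen (fun a b => 0 < k a b) x y

/-- A spanning rooted forest of the digraph of `k`, encoded functionally: each non-fixed
vertex `z` carries the single outgoing arc `(z, F z)`, every vertex eventually reaches a
fixed point (the root of its tree, toward which all arcs of the tree are directed, so there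
are no cycles), and every arc is an arc of the digraph. -/
def IsSpForest {K : Type*} (k : K → K → ℝ) (F : K → K) : Prop :=
  (∀ z, ∃ n : ℕ, F (F^[n] z) = F^[n] z) ∧ ∀ z, F z ≠ z → 0 < k z (F z)

/-- The weight of a forest: the product of the rates `k z (F z)` over its arcs. -/
noncomputable def forestWeight {K : Type*} [Fintype K] [DecidableEq K]
    (k : K → K → ℝ) (F : K → K) : ℝ :=
  ∏ z ∈ Finset.univ.filter (fun z => F z ≠ z), k z (F z)

/-- A spanning tree rooted at `x`: a spanning forest whose only root is `x`. -/
def IsSpTree {K : Type*} [Fintype K] [DecidableEq K] (k : K → K → ℝ) (F : K → K) (x : K) :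
    Prop :=
  IsSpForest k F ∧ Finset.univ.filter (fun z => F z = z) = {x}

/-- `w(x)`: the total weight of all spanning trees rooted at `x`. -/
noncomputable def treeWt {K : Type*} [Fintype K] [DecidableEq K] (k : K → K → ℝ) (x : K) : ℝ :=
  ∑ F ∈ Finset.univ.filter (fun F : K → K => IsSpTree k F x), forestWeight k F

/-- `W = ∑_x w(x)`: the total weight of all rooted spanning trees. -/
noncomputable def treeWtTotal {K : Type*} [Fintype K] [DecidableEq K] (k : K → K → ℝ) : ℝ :=
  ∑ x, treeWt k x

/-- A rooted spanning two-tree forest: a spanning forest with exactly two roots. -/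
def IsTwoForest {K : Type*} [Fintype K] [DecidableEq K] (k : K → K → ℝ) (F : K → K) : Prop :=
  IsSpForest k F ∧ (Finset.univ.filter (fun z => F z = z)).card = 2

/-- `w(x → y)`: the total weight of all rooted spanning two-tree forests in which `x` and `y`
lie in the same tree, that tree being rooted at `y`. -/
noncomputable def wTo {K : Type*} [Fintype K] [DecidableEq K] (k : K → K → ℝ) (x y : K) : ℝ :=
  ∑ F ∈ Finset.univ.filter
      (fun F : K → K => IsTwoForest k F ∧ F y = y ∧ ∃ n : ℕ, F^[n] x = y),
    forestWeight k F

/-- `w(x, z)`: the total weight of all rooted spanning two-tree forests in which `x` and `z`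
lie in different trees and the tree containing `z` is rooted at `z`. -/
noncomputable def wSep {K : Type*} [Fintype K] [DecidableEq K] (k : K → K → ℝ) (x z : K) : ℝ :=
  ∑ F ∈ Finset.univ.filter
      (fun F : K → K => IsTwoForest k F ∧ F z = z ∧ ¬∃ n : ℕ, F^[n] x = z),
    forestWeight k F

/-- `W₂`: the total weight of all rooted spanning two-tree forests. -/
noncomputable def wTwoTotal {K : Type*} [Fintype K] [DecidableEq K] (k : K → K → ℝ) : ℝ :=
  ∑ F ∈ Finset.univ.filter (fun F : K → K => IsTwoForest k F), forestWeight k F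
/-!
The candidate `M = (W₂ / W) • 𝟙ρᵀ - W⁻¹ • T`, where `T x y = w(ℱ^{x→y})`, is a group inverse of
`L`, and group inverses in a semigroup are unique. `M` is one because `L M = M L = 1 - 𝟙ρᵀ`,
`M 𝟙ρᵀ = 0` and `𝟙ρᵀ L = 0`. These follow from the forest identities `L T = T L = 𝟙wᵀ - W • 1`
and `T 𝟙 = W₂ 𝟙` together with Kirchhoff's formula `W • ρ = w`, which in turn follows from the
first identity and `ρ L = 0`.

An entry of `L T` or `T L` expands into sums over pairs of a vertex and a two-tree forest, weighted
by the rate of one extra arc. These are matched by weight-preserving bijections with spanning trees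
or with other such pairs: grafting one root onto a vertex of the other tree, moving the arc out of
`x`, joining the tree of `x` to `y` by an arc out of its root, and rerooting a tree at `y`.
-/

open Finset Function
open scoped Matrix

def IsGroupInverse {M : Type*} [Mul M] (a x : M) : Prop :=
  a * x * a = a ∧ x * a * x = x ∧ a * x = x * a

theorem IsGroupInverse.eq {M : Type*} [Semigroup M] {a x y : M} (hx : IsGroupInverse a x)
    (hy : IsGroupInverse a y) : x = y := by
  obtain ⟨hx₁, hx₂, hx₃⟩ := hx
  obtain ⟨hy₁, hy₂, hy₃⟩ := hy
  have hxy : a * x = a * y := calc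
    a * x = x * (a * y * a) := by rw [hx₃, hy₁]
    _ = (x * a) * (y * a) := by simp only [mul_assoc]
    _ = (a * x * a) * y := by rw [← hx₃, ← hy₃]; simp only [mul_assoc]
    _ = a * y := by rw [hx₁]
  calc x = x * a * x := hx₂.symm
    _ = x * a * y := by rw [mul_assoc, hxy, ← mul_assoc]
    _ = a * y * y := by rw [← hx₃, hxy]
    _ = y := by rw [hy₃, hy₂]

theorem isGroupInverse_of_mul_eq_one_sub {R : Type*} [Ring R] {a m p : R}
    (ham : a * m = 1 - p) (hma : m * a = 1 - p) (hmp : m * p = 0) (hpa : p * a = 0) :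
    IsGroupInverse a m :=
  ⟨by rw [ham, sub_mul, one_mul, hpa, sub_zero], by rw [mul_assoc, ham, mul_sub, mul_one, hmp,
    sub_zero], ham.trans hma.symm⟩

section Generator

variable {K : Type*} [Fintype K] [DecidableEq K] (k : K → K → ℝ)

theorem gen_apply_of_ne {x z : K} (h : x ≠ z) : gen k x z = k x z := by
  simp [gen, h]

theorem gen_apply_self (x : K) : gen k x x = -∑ z ∈ univ.erase x, k x z := by
  simp [gen]

theorem sum_gen_mul (f : K → ℝ) (x : K) :
    ∑ z, gen k x z * f z = ∑ z ∈ univ.erase x, k x z * (f z - f x) := by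
  have hoff : ∑ z ∈ univ.erase x, gen k x z * f z = ∑ z ∈ univ.erase x, k x z * f z :=
    sum_congr rfl fun z hz => by rw [gen_apply_of_ne k (ne_of_mem_erase hz).symm]
  rw [← add_sum_erase _ _ (mem_univ x), gen_apply_self, hoff]
  simp only [mul_sub, sum_sub_distrib, ← sum_mul]
  ring

theorem sum_mul_gen (f : K → ℝ) (y : K) :
    ∑ z, f z * gen k z y = ∑ z ∈ univ.erase y, (k z y * f z - k y z * f y) := by
  have hoff : ∑ z ∈ univ.erase y, f z * gen k z y = ∑ z ∈ univ.erase y, k z y * f z :=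
    sum_congr rfl fun z hz => by rw [gen_apply_of_ne k (ne_of_mem_erase hz), mul_comm]
  rw [← add_sum_erase _ _ (mem_univ y), gen_apply_self, hoff]
  simp only [sum_sub_distrib, ← sum_mul]
  ring

theorem gen_mulVec_one : gen k *ᵥ (1 : K → ℝ) = 0 := by
  ext x
  simpa [Matrix.mulVec, dotProduct] using sum_gen_mul k 1 x

end Generator

section Iteration

variable {α : Type*} {F : α → α} {a b c r u v x y : α}

def Reaches (F : α → α) (a b : α) : Prop := ∃ n, F^[n] a = b

def IsRooted (F : α → α) : Prop := ∀ a, ∃ n, F (F^[n] a) = F^[n] a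

namespace Reaches

theorem refl (F : α → α) (a : α) : Reaches F a a := ⟨0, rfl⟩

theorem apply_self (F : α → α) (a : α) : Reaches F a (F a) := ⟨1, rfl⟩

theorem trans (hab : Reaches F a b) (hbc : Reaches F b c) : Reaches F a c := by
  obtain ⟨m, rfl⟩ := hab
  obtain ⟨n, rfl⟩ := hbc
  exact ⟨n + m, iterate_add_apply F n m a⟩

theorem eq_of_fixed (ha : F a = a) (h : Reaches F a b) : b = a := by
  obtain ⟨n, rfl⟩ := h
  exact iterate_fixed ha n

theorem total (hb : Reaches F a b) (hc : Reaches F a c) : Reaches F b c ∨ Reaches F c b := by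
  obtain ⟨m, rfl⟩ := hb
  obtain ⟨n, rfl⟩ := hc
  rcases le_total m n with h | h
  · exact Or.inl ⟨n - m, by rw [← iterate_add_apply, Nat.sub_add_cancel h]⟩
  · exact Or.inr ⟨m - n, by rw [← iterate_add_apply, Nat.sub_add_cancel h]⟩

theorem root_unique (hb : Reaches F a b) (hc : Reaches F a c) (hFb : F b = b) (hFc : F c = c) :
    b = c := by
  rcases hb.total hc with h | h
  · exact (h.eq_of_fixed hFb).symm
  · exact h.eq_of_fixed hFc

theorem apply_iff (hab : a ≠ b) : Reaches F (F a) b ↔ Reaches F a b := by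
  refine ⟨(apply_self F a).trans, fun ⟨n, hn⟩ => ?_⟩
  cases n with
  | zero => exact absurd hn hab
  | succ n => exact ⟨n, by rwa [iterate_succ_apply] at hn⟩

theorem exists_pred (h : Reaches F a b) (hab : a ≠ b) :
    ∃ u, Reaches F a u ∧ F u = b ∧ u ≠ b := by
  obtain ⟨n, hn⟩ := h
  induction n generalizing a with
  | zero => exact absurd hn hab
  | succ n ih =>
    by_cases hFa : F a = b
    · exact ⟨a, refl F a, hFa, hab⟩
    · obtain ⟨u, hu, hFu, hub⟩ := ih hFa (by rwa [iterate_succ_apply] at hn)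
      exact ⟨u, (apply_self F a).trans hu, hFu, hub⟩

theorem pred_unique (hFb : F b = b) (hu : Reaches F a u) (hv : Reaches F a v) (hFu : F u = b)
    (hFv : F v = b) (hub : u ≠ b) (hvb : v ≠ b) : u = v := by
  by_contra huv
  rcases hu.total hv with h | h
  · exact hvb (((apply_iff huv).2 h).eq_of_fixed (hFu ▸ hFb) |>.trans hFu)
  · exact hub (((apply_iff (Ne.symm huv)).2 h).eq_of_fixed (hFv ▸ hFb) |>.trans hFv)

end Reaches

theorem isRooted_iff : IsRooted F ↔ ∀ a, ∃ r, F r = r ∧ Reaches F a r :=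
  ⟨fun hF a => (hF a).elim fun n hn => ⟨_, hn, n, rfl⟩,
    fun h a => (h a).elim fun _ ⟨hr, n, hn⟩ => ⟨n, hn ▸ hr⟩⟩

theorem IsRooted.not_reaches_apply (hF : IsRooted F) (ha : F a ≠ a) : ¬ Reaches F (F a) a := by
  rintro ⟨n, hn⟩
  have hper : IsPeriodicPt F (n + 1) a := by rwa [IsPeriodicPt, IsFixedPt, iterate_succ_apply]
  obtain ⟨m, hm⟩ := hF a
  have hstay : F^[(n + 1) * m] a = F^[m] a := by
    rw [← Nat.sub_add_cancel (Nat.le_mul_of_pos_left m n.succ_pos), iterate_add_apply,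
      iterate_fixed hm]
  have hroot : F^[m] a = a := hstay.symm.trans (hper.mul_const m).eq
  rw [hroot] at hm
  exact ha hm

noncomputable def rootOf (F : α → α) (a : α) : α :=
  if h : ∃ r, F r = r ∧ Reaches F a r then h.choose else a

theorem IsRooted.rootOf_eq_iff (hF : IsRooted F) : rootOf F a = r ↔ F r = r ∧ Reaches F a r := by
  have h := isRooted_iff.1 hF a
  rw [rootOf, dif_pos h]
  exact ⟨fun hr => hr ▸ h.choose_spec, fun ⟨hr, har⟩ =>
    Reaches.root_unique h.choose_spec.2 har h.choose_spec.1 hr⟩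

theorem exists_pred_ite (hcy : c ≠ y) (hxy : Reaches F x y) (hor : x ≠ y ∨ Reaches F c y) :
    ∃ u, Reaches F (if Reaches F c y then c else x) u ∧ F u = y ∧ u ≠ y := by
  split_ifs with hc
  · exact hc.exists_pred hcy
  · exact hxy.exists_pred (hor.resolve_right hc)

variable [DecidableEq α]

theorem iterate_update_of_forall_ne {n : ℕ} (h : ∀ i < n, F^[i] a ≠ x) :
    (update F x c)^[n] a = F^[n] a := by
  induction n generalizing a with
  | zero => rfl
  | succ n ih =>
    have hax : a ≠ x := h 0 n.succ_pos
    rw [iterate_succ_apply, iterate_succ_apply, update_of_ne hax]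
    exact ih fun i hi => by rw [← iterate_succ_apply]; exact h (i + 1) (by omega)

theorem reaches_update_iff (h : ¬ Reaches F a x) :
    Reaches (update F x c) a b ↔ Reaches F a b := by
  have hn : ∀ n, (update F x c)^[n] a = F^[n] a := fun n =>
    iterate_update_of_forall_ne fun i _ hi => h ⟨i, hi⟩
  simp only [Reaches, hn]

theorem Reaches.update_hit (h : Reaches F a x) : Reaches (update F x c) a x :=
  ⟨Nat.find h, (iterate_update_of_forall_ne fun _ hi => Nat.find_min h hi).trans
    (Nat.find_spec h)⟩

theorem Reaches.update_or (h : Reaches F a b) :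
    Reaches (update F x c) a b ∨ Reaches (update F x c) a x := by
  by_cases hx : Reaches F a x
  · exact Or.inr hx.update_hit
  · exact Or.inl ((reaches_update_iff hx).2 h)

theorem Reaches.not_reaches_update_self (h : Reaches F a u) (hy : F y = y) (huy : u ≠ y) :
    ¬ Reaches (update F u u) a y := fun hay =>
  huy (h.update_hit.root_unique hay (update_self u u F) (by rwa [update_of_ne huy.symm]))

theorem IsRooted.update_of_exists_root (hF : IsRooted F)
    (hc : ∃ r, update F x c r = r ∧ Reaches (update F x c) c r) : IsRooted (update F x c) := by
  refine isRooted_iff.2 fun a => ?_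
  by_cases hax : Reaches F a x
  · obtain ⟨r, hr, hcr⟩ := hc
    have hxc : Reaches (update F x c) x c := by
      simpa using Reaches.apply_self (update F x c) x
    exact ⟨r, hr, hax.update_hit.trans (hxc.trans hcr)⟩
  · obtain ⟨r, hr, har⟩ := isRooted_iff.1 hF a
    have hrx : r ≠ x := fun h => hax (h ▸ har)
    exact ⟨r, by rwa [update_of_ne hrx], (reaches_update_iff hax).2 har⟩

end Iteration

section Forest

variable {K : Type*} [DecidableEq K] {k : K → K → ℝ} {F T : K → K} {a c r u v x : K}

theorem IsSpForest.update_of_exists_root (hF : IsSpForest k F)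
    (hc : ∃ r, update F x c r = r ∧ Reaches (update F x c) c r) (hxc : c ≠ x → 0 < k x c) :
    IsSpForest k (update F x c) := by
  refine ⟨IsRooted.update_of_exists_root hF.1 hc, fun v hv => ?_⟩
  by_cases hvx : v = x
  · subst hvx
    rw [update_self] at hv ⊢
    exact hxc hv
  · rw [update_of_ne hvx] at hv ⊢
    exact hF.2 v hv

theorem IsSpForest.cut (hF : IsSpForest k F) (x : K) : IsSpForest k (update F x x) :=
  hF.update_of_exists_root ⟨x, update_self x x F, Reaches.refl _ x⟩ fun h => absurd rfl h

theorem IsSpForest.graft (hF : IsSpForest k F) (hc : ¬ Reaches F c x) (hxc : 0 < k x c) :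
    IsSpForest k (update F x c) := by
  obtain ⟨r, hr, hcr⟩ := isRooted_iff.1 hF.1 c
  have hrx : r ≠ x := fun h => hc (h ▸ hcr)
  exact hF.update_of_exists_root ⟨r, by rwa [update_of_ne hrx], (reaches_update_iff hc).2 hcr⟩
    fun _ => hxc

variable [Fintype K]

def roots (F : K → K) : Finset K := univ.filter fun v => F v = v

@[simp] theorem mem_roots : v ∈ roots F ↔ F v = v := by simp [roots]

theorem roots_update_self (x : K) : roots (update F x x) = insert x (roots F) := by
  ext v
  by_cases hv : v = x <;> simp [hv]

theorem roots_update_of_ne (hc : c ≠ x) : roots (update F x c) = (roots F).erase x := by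
  ext v
  by_cases hv : v = x <;> simp [hv, hc]

theorem forestWeight_eq_mul_update_self (F : K → K) (x : K) :
    forestWeight k F = (if F x = x then 1 else k x (F x)) * forestWeight k (update F x x) := by
  by_cases hx : F x = x
  · rw [if_pos hx, one_mul, update_eq_self_iff.2 hx.symm]
  · rw [if_neg hx, forestWeight, forestWeight, ← mul_prod_erase _ _ (by simpa using hx)]
    congr 1
    refine prod_congr (by ext v; by_cases hv : v = x <;> simp [hv]) fun v hv => ?_
    have hvx : v ≠ x := by rintro rfl; simp at hv
    rw [update_of_ne hvx]

theorem forestWeight_update_of_fixed (hx : F x = x) (hc : c ≠ x) :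
    forestWeight k (update F x c) = k x c * forestWeight k F := by
  rw [forestWeight_eq_mul_update_self _ x, update_self, if_neg hc, update_idem,
    update_eq_self_iff.2 hx.symm]

theorem forestWeight_update_of_not_fixed (hx : F x ≠ x) (hc : c ≠ x) :
    k x (F x) * forestWeight k (update F x c) = k x c * forestWeight k F := by
  rw [forestWeight_eq_mul_update_self F x, forestWeight_eq_mul_update_self (update F x c) x,
    update_self, if_neg hc, if_neg hx, update_idem]
  ring

theorem forestWeight_pos (hF : IsSpForest k F) : 0 < forestWeight k F :=
  prod_pos fun v hv => hF.2 v (mem_filter.1 hv).2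

theorem IsSpTree.apply_eq_self_iff (hT : IsSpTree k T r) : T v = v ↔ v = r := by
  simpa [← mem_roots] using congrArg (v ∈ ·) hT.2

theorem IsSpTree.reaches (hT : IsSpTree k T r) (v : K) : Reaches T v r := by
  obtain ⟨r', hr', hvr'⟩ := isRooted_iff.1 hT.1.1 v
  rwa [← hT.apply_eq_self_iff.1 hr']

theorem IsSpTree.cut (hT : IsSpTree k T r) (hur : u ≠ r) : IsTwoForest k (update T u u) := by
  refine ⟨hT.1.cut u, ?_⟩
  change (roots (update T u u)).card = 2
  rw [roots_update_self, show roots T = {r} from hT.2, card_pair hur]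

theorem IsTwoForest.graft_isSpTree (hF : IsTwoForest k F) (hx : F x = x) (hr : F r = r)
    (hrx : r ≠ x) (hc : ¬ Reaches F c x) (hxc : 0 < k x c) : IsSpTree k (update F x c) r := by
  refine ⟨hF.1.graft hc hxc, ?_⟩
  change roots (update F x c) = {r}
  have hcx : c ≠ x := fun h => hc (h ▸ Reaches.refl F c)
  have hcard : ((roots F).erase x).card = 1 := by
    rw [card_erase_of_mem (mem_roots.2 hx)]
    exact congrArg (· - 1) hF.2
  obtain ⟨s, hs⟩ := card_eq_one.1 hcard
  have hrs : r ∈ (roots F).erase x := mem_erase.2 ⟨hrx, mem_roots.2 hr⟩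
  rw [hs, mem_singleton] at hrs
  rw [roots_update_of_ne hcx, hs, hrs]

theorem IsTwoForest.graft (hF : IsTwoForest k F) (hx : F x ≠ x) (hc : ¬ Reaches F c x)
    (hxc : 0 < k x c) : IsTwoForest k (update F x c) := by
  have hcx : c ≠ x := fun h => hc (h ▸ Reaches.refl F c)
  refine ⟨hF.1.graft hc hxc, ?_⟩
  change (roots (update F x c)).card = 2
  rw [roots_update_of_ne hcx, erase_eq_of_notMem (by simpa using hx)]
  exact hF.2

theorem IsTwoForest.cut_graft (hF : IsTwoForest k F) (hu : F u ≠ u) (hv : F v = v)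
    (hc : ¬ Reaches (update F u u) c v) (hvc : 0 < k v c) :
    IsTwoForest k (update (update F u u) v c) := by
  have hcv : c ≠ v := fun h => hc (h ▸ Reaches.refl _ c)
  refine ⟨(hF.1.cut u).graft hc hvc, ?_⟩
  change (roots (update (update F u u) v c)).card = 2
  have h2 : (roots F).card = 2 := hF.2
  rw [roots_update_of_ne hcv, roots_update_self,
    card_erase_of_mem (mem_insert_of_mem (mem_roots.2 hv)),
    card_insert_of_notMem (by simpa using hu), h2]

theorem exists_isSpTree_of_descent {y : K} (d : K → ℕ)
    (hd : ∀ v ≠ y, ∃ w, 0 < k v w ∧ d w < d v) : ∃ T, IsSpTree k T y := by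
  have hstep : ∀ v, ∃ w, (v = y → w = y) ∧ (v ≠ y → 0 < k v w ∧ d w < d v) := fun v => by
    by_cases hvy : v = y
    · exact ⟨y, fun _ => rfl, absurd hvy⟩
    · exact (hd v hvy).imp fun w hw => ⟨fun h => absurd h hvy, fun _ => hw⟩
  choose T hTy hT using hstep
  have hreach : ∀ v, Reaches T v y := fun v => by
    induction hdv : d v using Nat.strong_induction_on generalizing v with
    | _ n ih =>
      by_cases hvy : v = y
      · exact hvy ▸ Reaches.refl T v
      · exact (Reaches.apply_self T v).trans (ih _ (hdv ▸ (hT v hvy).2) _ rfl)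
  have hroot : ∀ v, T v = v ↔ v = y := fun v =>
    ⟨fun hv => by_contra fun hvy => (hT v hvy).2.ne (by rw [hv]), fun hv => by rw [hTy v hv, hv]⟩
  refine ⟨T, ⟨isRooted_iff.2 fun v => ⟨y, hTy y rfl, hreach v⟩, fun v hv => ?_⟩, ?_⟩
  · exact (hT v ((hroot v).not.1 hv)).1
  · ext v
    simp [hroot]

def HasPathOfLength (k : K → K → ℝ) (y : K) : ℕ → K → Prop
  | 0, v => v = y
  | n + 1, v => ∃ w, 0 < k v w ∧ HasPathOfLength k y n w

theorem exists_isSpTree (hirr : StronglyConnected k) (y : K) : ∃ T, IsSpTree k T y := by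
  have hpath : ∀ v, ∃ n, HasPathOfLength k y n v := fun v => by
    induction hirr v y using Relation.ReflTransGen.head_induction_on with
    | refl => exact ⟨0, rfl⟩
    | head hvw _ ih => exact ih.elim fun n hn => ⟨n + 1, _, hvw, hn⟩
  refine exists_isSpTree_of_descent (fun v => Nat.find (hpath v)) fun v hvy => ?_
  obtain ⟨n, hn⟩ : ∃ n, Nat.find (hpath v) = n + 1 :=
    Nat.exists_eq_succ_of_ne_zero fun h => hvy <| by
      simpa [h, HasPathOfLength] using Nat.find_spec (hpath v)
  obtain ⟨w, hvw, hw⟩ : HasPathOfLength k y (n + 1) v := hn ▸ Nat.find_spec (hpath v)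
  exact ⟨w, hvw, (Nat.find_min' (hpath w) hw).trans_lt (by omega)⟩

theorem treeWt_pos (hirr : StronglyConnected k) (y : K) : 0 < treeWt k y := by
  obtain ⟨T, hT⟩ := exists_isSpTree hirr y
  exact sum_pos' (fun T hT => (forestWeight_pos (mem_filter.1 hT).2.1).le)
    ⟨T, by simpa using hT, forestWeight_pos hT.1⟩

theorem treeWtTotal_pos [Nonempty K] (hirr : StronglyConnected k) : 0 < treeWtTotal k :=
  sum_pos (fun y _ => treeWt_pos hirr y) univ_nonempty

end Forest

section Reroot

variable {K : Type*} [DecidableEq K] {k : K → K → ℝ} {F : K → K} {c u x y z : K}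

def reroot (F : K → K) (z y : K) : K → K := update (update F y y) z y

theorem reroot_apply_root (hzy : z ≠ y) : reroot F z y y = y := by
  simp [reroot, hzy.symm]

theorem reroot_apply_self : reroot F z y z = y := by
  simp [reroot]

theorem reroot_reaches_root (hxz : Reaches F x z) : Reaches (reroot F z y) x y := by
  have hstep : Reaches (reroot F z y) z y := by
    simpa [reroot_apply_self] using Reaches.apply_self (reroot F z y) z
  rcases hxz.update_or (x := y) (c := y) with hxz' | hxy
  · exact hxz'.update_hit.trans hstep
  · exact hxy.update_or.elim id (·.trans hstep)

theorem reroot_reaches_of_reaches (hF : IsRooted F) (hFy : F y ≠ y) (hzy : z ≠ y)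
    (h : Reaches F y z) : Reaches (reroot F z y) (F y) z :=
  ((reaches_update_iff (hF.not_reaches_apply hFy)).2 ((Reaches.apply_iff hzy.symm).2 h)).update_hit

theorem reaches_of_reroot_reaches (hF : IsRooted F) (hFy : F y ≠ y)
    (h : Reaches (reroot F z y) (F y) y) : Reaches F y z := by
  have hFyy := hF.not_reaches_apply hFy
  by_cases hz : Reaches (update F y y) (F y) z
  · exact (Reaches.apply_self F y).trans ((reaches_update_iff hFyy).1 hz)
  · exact absurd ((reaches_update_iff hFyy).1 ((reaches_update_iff hz).1 h)) hFyy

theorem reroot_reaches_of_not (hz : F z = z) (hzy : z ≠ y) (hxz : Reaches F x z)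
    (h : ¬ Reaches F y z) : Reaches (reroot F z y) x z := by
  have hxy : ¬ Reaches F x y := fun hxy =>
    (hxy.total hxz).elim h fun hzy' => hzy (hzy'.eq_of_fixed hz).symm
  exact ((reaches_update_iff hxy).2 hxz).update_hit

theorem forestWeight_reroot [Fintype K] (hz : F z = z) (hFy : F y ≠ y) (hzy : z ≠ y) :
    k z y * forestWeight k F = k y (F y) * forestWeight k (reroot F z y) := by
  rw [reroot, forestWeight_update_of_fixed (by rwa [update_of_ne hzy]) hzy.symm,
    forestWeight_eq_mul_update_self F y, if_neg hFy]
  ring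

theorem reroot_unreroot (hu : F u = y) (hy : F y = y) (huy : u ≠ y) :
    reroot (update (update F u u) y c) u y = F := by
  ext v
  by_cases hvy : v = y
  · simp [reroot, hvy, hy, huy.symm]
  · by_cases hvu : v = u <;> simp [reroot, hvy, hvu, hu]

theorem unreroot_reroot (hz : F z = z) (hzy : z ≠ y) :
    update (update (reroot F z y) z z) y (F y) = F := by
  ext v
  by_cases hvy : v = y
  · simp [hvy]
  · by_cases hvz : v = z <;> simp [reroot, hvy, hvz, hz, hzy]

-- `z` is recovered from `reroot F z y` as the last vertex before `y` on the path from `F y` if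
-- that path reaches `y`, and on the path from `x` otherwise.
theorem reroot_reaches_ite (hF : IsRooted F) (hz : F z = z) (hFy : F y ≠ y) (hzy : z ≠ y)
    (hxz : Reaches F x z) :
    Reaches (reroot F z y) (if Reaches (reroot F z y) (F y) y then F y else x) z := by
  split_ifs with h
  · exact reroot_reaches_of_reaches hF hFy hzy (reaches_of_reroot_reaches hF hFy h)
  · refine reroot_reaches_of_not hz hzy hxz fun hyz => h ?_
    exact (reroot_reaches_of_reaches hF hFy hzy hyz).trans
      (by simpa [reroot_apply_self] using Reaches.apply_self (reroot F z y) z)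

theorem not_reaches_unreroot (hu : F u = y) (hy : F y = y) (huy : u ≠ y)
    (hstart : Reaches F (if Reaches F c y then c else x) u) : ¬ Reaches (update F u u) c y := by
  split_ifs at hstart with hc
  · exact hstart.not_reaches_update_self hy huy
  · have hcu : ¬ Reaches F c u := fun hcu =>
      hc (hcu.trans (by simpa [hu] using Reaches.apply_self F u))
    exact fun h => hc ((reaches_update_iff hcu).1 h)

theorem reaches_unreroot (hy : F y = y) (huy : u ≠ y) (hxy : Reaches F x y)
    (hstart : Reaches F (if Reaches F c y then c else x) u)
    (hc : ¬ Reaches (update F u u) c y) : Reaches (update (update F u u) y c) x u := by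
  by_cases hxu : Reaches (update F u u) x u
  · refine (reaches_update_iff fun hxy' => huy ?_).2 hxu
    exact hxu.root_unique hxy' (update_self u u F) (by rwa [update_of_ne huy.symm])
  · have hcy : Reaches F c y := by
      by_contra hcy
      rw [if_neg hcy] at hstart
      exact hxu hstart.update_hit
    rw [if_pos hcy] at hstart
    have hyc : Reaches (update (update F u u) y c) y c := by
      simpa using Reaches.apply_self (update (update F u u) y c) y
    exact (hxy.update_or.resolve_right hxu).update_hit.trans
      (hyc.trans ((reaches_update_iff hc).2 hstart.update_hit))

end Reroot

section ArcForestSum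

variable {K : Type*} [Fintype K] [DecidableEq K] (k : K → K → ℝ) {a : K → ℝ}
  {P Q R : K → (K → K) → Prop}

-- A pair `(z, F)` stands for the forest `F` plus one extra arc of rate `a z`; only arcs of the
-- digraph (`0 < a z`) are counted, so that adding the arc to `F` keeps a forest.
noncomputable def arcForestSum (a : K → ℝ) (P : K → (K → K) → Prop) : ℝ :=
  ∑ p ∈ univ.filter (fun p : K × (K → K) => 0 < a p.1 ∧ IsTwoForest k p.2 ∧ P p.1 p.2),
    a p.1 * forestWeight k p.2

theorem arcForestSum_congr (h : ∀ z F, 0 < a z → IsTwoForest k F → (P z F ↔ Q z F)) :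
    arcForestSum k a P = arcForestSum k a Q :=
  sum_congr (filter_congr fun _ _ =>
    and_congr_right fun ha => and_congr_right fun hF => h _ _ ha hF) fun _ _ => rfl

theorem arcForestSum_eq_add (h : ∀ z F, 0 < a z → IsTwoForest k F → (P z F ↔ Q z F ∨ R z F))
    (hQR : ∀ z F, Q z F → ¬ R z F) :
    arcForestSum k a P = arcForestSum k a Q + arcForestSum k a R := by
  rw [arcForestSum, arcForestSum, arcForestSum, ← sum_union]
  · refine sum_congr ?_ fun _ _ => rfl
    ext ⟨z, F⟩
    simp only [mem_filter, mem_union, mem_univ, true_and]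
    constructor
    · rintro ⟨ha, hF, hP⟩
      exact ((h z F ha hF).1 hP).imp (⟨ha, hF, ·⟩) (⟨ha, hF, ·⟩)
    · rintro (⟨ha, hF, hQ⟩ | ⟨ha, hF, hR⟩)
      exacts [⟨ha, hF, (h z F ha hF).2 (Or.inl hQ)⟩, ⟨ha, hF, (h z F ha hF).2 (Or.inr hR)⟩]
  · exact disjoint_filter.2 fun _ _ hQ hR => hQR _ _ hQ.2.2 hR.2.2

theorem arcForestSum_eq_zero (h : ∀ z F, 0 < a z → IsTwoForest k F → ¬ P z F) :
    arcForestSum k a P = 0 :=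
  sum_eq_zero fun p hp => by
    simp only [mem_filter, mem_univ, true_and] at hp
    exact absurd hp.2.2 (h _ _ hp.1 hp.2.1)

theorem sum_mul_wTo (x : K) (ha : ∀ z ≠ x, 0 ≤ a z) (f g : K → K) :
    ∑ z ∈ univ.erase x, a z * wTo k (f z) (g z) =
      arcForestSum k a (fun z F => z ≠ x ∧ F (g z) = g z ∧ Reaches F (f z) (g z)) := by
  rw [arcForestSum, sum_filter, Fintype.sum_prod_type, ← filter_ne', sum_filter]
  refine sum_congr rfl fun z _ => ?_
  by_cases hzx : z = x
  · simp [hzx]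
  rw [if_pos hzx, wTo, mul_sum, sum_filter]
  refine sum_congr rfl fun F _ => ?_
  rcases (ha z hzx).lt_or_eq with hpos | hzero
  · simp only [Reaches, hpos, ne_eq, hzx, not_false_eq_true, true_and]
  · simp [← hzero]

end ArcForestSum

section Bijections

variable {K : Type*} [Fintype K] [DecidableEq K] {k : K → K → ℝ} {r x y : K}

theorem arcForestSum_graft (hrx : r ≠ x) :
    arcForestSum k (k x) (fun z F => z ≠ x ∧ F x = x ∧ rootOf F z = r) = treeWt k r := by
  refine sum_nbij' (fun p => update p.2 x p.1) (fun T => (T x, update T x x)) ?_ ?_ ?_ ?_ ?_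
  · rintro ⟨z, F⟩ h
    simp only [mem_filter, mem_univ, true_and] at h ⊢
    obtain ⟨hxz, hF, hzx, hFx, hroot⟩ := h
    obtain ⟨hr, hzr⟩ := (IsRooted.rootOf_eq_iff hF.1.1).1 hroot
    exact hF.graft_isSpTree hFx hr hrx (fun hzx' => hrx (hzr.root_unique hzx' hr hFx)) hxz
  · intro T hT
    simp only [mem_filter, mem_univ, true_and] at hT ⊢
    have hTx : T x ≠ x := hT.apply_eq_self_iff.not.2 hrx.symm
    refine ⟨hT.1.2 x hTx, hT.cut hrx.symm, hTx, update_self x x T,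
      (IsRooted.rootOf_eq_iff (hT.1.cut x).1).2 ⟨?_, ?_⟩⟩
    · rw [update_of_ne hrx, hT.apply_eq_self_iff]
    · exact (reaches_update_iff (IsRooted.not_reaches_apply hT.1.1 hTx)).2 (hT.reaches (T x))
  · rintro ⟨z, F⟩ h
    simp only [mem_filter, mem_univ, true_and] at h
    simpa using h.2.2.2.1.symm
  · intro T _
    simp
  · rintro ⟨z, F⟩ h
    simp only [mem_filter, mem_univ, true_and] at h
    exact (forestWeight_update_of_fixed h.2.2.2.1 h.2.2.1).symm

theorem arcForestSum_graft_sum (x : K) :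
    arcForestSum k (k x) (fun z F => z ≠ x ∧ F x = x ∧ ¬ Reaches F z x) =
      ∑ r ∈ univ.erase x, treeWt k r := by
  rw [arcForestSum, ← sum_fiberwise_of_maps_to (t := univ.erase x)
    (g := fun p : K × (K → K) => rootOf p.2 p.1) ?maps]
  case maps =>
    rintro ⟨z, F⟩ h
    simp only [mem_filter, mem_univ, true_and] at h
    obtain ⟨-, hzr⟩ := (IsRooted.rootOf_eq_iff h.2.1.1.1).1 rfl
    exact mem_erase.2 ⟨fun hrx => h.2.2.2.2 (hrx ▸ hzr), mem_univ _⟩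
  refine sum_congr rfl fun r hr => ?_
  rw [← arcForestSum_graft (ne_of_mem_erase hr), arcForestSum]
  refine sum_congr ?_ fun _ _ => rfl
  ext ⟨z, F⟩
  simp only [mem_filter, mem_univ, true_and]
  constructor
  · rintro ⟨⟨hxz, hF, hzx, hFx, -⟩, hroot⟩
    exact ⟨hxz, hF, hzx, hFx, hroot⟩
  · rintro ⟨hxz, hF, hzx, hFx, hroot⟩
    obtain ⟨hr', hzr⟩ := (IsRooted.rootOf_eq_iff hF.1.1).1 hroot
    exact ⟨⟨hxz, hF, hzx, hFx, fun hzx' => ne_of_mem_erase hr (hzr.root_unique hzx' hr' hFx)⟩,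
      hroot⟩

theorem arcForestSum_swap (hxy : x ≠ y) :
    arcForestSum k (k x)
        (fun z F => z ≠ x ∧ F y = y ∧ F x ≠ x ∧ ¬ Reaches F z x ∧ Reaches F x y) =
      arcForestSum k (k x)
        (fun z F => z ≠ x ∧ F y = y ∧ F x ≠ x ∧ ¬ Reaches F z x ∧ Reaches F z y) := by
  have hmaps : ∀ z F, 0 < k x z → IsTwoForest k F → F x ≠ x → ¬ Reaches F z x → F y = y →
      0 < k x (F x) ∧ IsTwoForest k (update F x z) ∧ update F x z y = y ∧
        update F x z x ≠ x ∧ ¬ Reaches (update F x z) (F x) x ∧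
        (Reaches (update F x z) (F x) y ↔ Reaches F x y) ∧
        (Reaches (update F x z) x y ↔ Reaches F z y) := by
    intro z F hxz hF hFx hz hFy
    have hFxx : ¬ Reaches F (F x) x := IsRooted.not_reaches_apply hF.1.1 hFx
    have hzx : z ≠ x := fun h => hz (h ▸ Reaches.refl F z)
    refine ⟨hF.1.2 x hFx, hF.graft hFx hz hxz, by rwa [update_of_ne hxy.symm],
      by rwa [update_self], fun h => hFxx ((reaches_update_iff hFxx).1 h),
      (reaches_update_iff hFxx).trans (Reaches.apply_iff hxy), ?_⟩
    rw [← Reaches.apply_iff hxy, update_self, reaches_update_iff hz]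
  refine sum_nbij' (fun p => (p.2 x, update p.2 x p.1)) (fun p => (p.2 x, update p.2 x p.1))
    ?_ ?_ ?_ ?_ ?_
  · rintro ⟨z, F⟩ h
    simp only [mem_filter, mem_univ, true_and] at h ⊢
    obtain ⟨hxz, hF, -, hFy, hFx, hz, hreach⟩ := h
    obtain ⟨h₁, h₂, h₃, h₄, h₅, h₆, -⟩ := hmaps z F hxz hF hFx hz hFy
    exact ⟨h₁, h₂, hFx, h₃, h₄, h₅, h₆.2 hreach⟩
  · rintro ⟨z, F⟩ h
    simp only [mem_filter, mem_univ, true_and] at h ⊢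
    obtain ⟨hxz, hF, -, hFy, hFx, hz, hreach⟩ := h
    obtain ⟨h₁, h₂, h₃, h₄, h₅, -, h₇⟩ := hmaps z F hxz hF hFx hz hFy
    exact ⟨h₁, h₂, hFx, h₃, h₄, h₅, h₇.2 hreach⟩
  · intro p _
    simp
  · intro p _
    simp
  · rintro ⟨z, F⟩ h
    simp only [mem_filter, mem_univ, true_and] at h
    exact (forestWeight_update_of_not_fixed h.2.2.2.2.1 h.2.2.1).symm

theorem arcForestSum_join (hxy : x ≠ y) :
    arcForestSum k (fun z => k z y) (fun z F => z ≠ y ∧ F z = z ∧ F y = y ∧ Reaches F x z) =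
      treeWt k y := by
  refine sum_bij (fun p _ => update p.2 p.1 y) ?_ ?_ ?_ ?_
  · rintro ⟨z, F⟩ h
    simp only [mem_filter, mem_univ, true_and] at h ⊢
    obtain ⟨hzy, hF, hz, hFz, hFy, -⟩ := h
    exact hF.graft_isSpTree hFz hFy hz.symm (fun h => hz (h.eq_of_fixed hFy)) hzy
  · rintro ⟨z₁, F₁⟩ h₁ ⟨z₂, F₂⟩ h₂ heq
    simp only [mem_filter, mem_univ, true_and] at h₁ h₂ heq
    obtain ⟨-, -, hz₁, hFz₁, hFy₁, hxz₁⟩ := h₁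
    obtain ⟨-, -, hz₂, hFz₂, -, hxz₂⟩ := h₂
    have hz : z₁ = z₂ := Reaches.pred_unique (by rwa [update_of_ne hz₁.symm]) hxz₁.update_hit
      (heq ▸ hxz₂.update_hit) (update_self z₁ y F₁) (heq ▸ update_self z₂ y F₂) hz₁ hz₂
    subst hz
    have hF : ∀ F : K → K, F z₁ = z₁ → update (update F z₁ y) z₁ z₁ = F := fun F hF => by
      rw [update_idem, update_eq_self_iff.2 hF.symm]
    rw [← hF F₁ hFz₁, ← hF F₂ hFz₂, heq]
  · intro T hT
    simp only [mem_filter, mem_univ, true_and] at hT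
    obtain ⟨u, hxu, hTu, huy⟩ := (hT.reaches x).exists_pred hxy
    refine ⟨(u, update T u u), ?_, by simp [← hTu]⟩
    simp only [mem_filter, mem_univ, true_and]
    refine ⟨hTu ▸ hT.1.2 u (hTu ▸ huy.symm), hT.cut huy, huy, update_self u u T, ?_,
      hxu.update_hit⟩
    rw [update_of_ne huy.symm, hT.apply_eq_self_iff]
  · rintro ⟨z, F⟩ h
    simp only [mem_filter, mem_univ, true_and] at h
    exact (forestWeight_update_of_fixed h.2.2.2.1 h.2.2.1.symm).symm

theorem arcForestSum_reroot (x y : K) :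
    arcForestSum k (fun z => k z y) (fun z F => z ≠ y ∧ F z = z ∧ F y ≠ y ∧ Reaches F x z) =
      arcForestSum k (k y)
        (fun c F => c ≠ y ∧ F y = y ∧ Reaches F x y ∧ (x ≠ y ∨ Reaches F c y)) := by
  refine sum_bij (fun p _ => (p.2 y, reroot p.2 p.1 y)) ?_ ?_ ?_ ?_
  · rintro ⟨z, F⟩ h
    simp only [mem_filter, mem_univ, true_and] at h ⊢
    obtain ⟨hzy', hF, hzy, hz, hFy, hxz⟩ := h
    refine ⟨hF.1.2 y hFy, hF.cut_graft hFy hz (fun h => hzy (h.eq_of_fixed (update_self y y F)))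
      hzy', hFy, reroot_apply_root hzy, reroot_reaches_root hxz, ?_⟩
    rcases ne_or_eq x y with hxy | rfl
    · exact Or.inl hxy
    · exact Or.inr ((reroot_reaches_of_reaches hF.1.1 hFy hzy hxz).trans
        (by simpa [reroot_apply_self] using Reaches.apply_self (reroot F z x) z))
  · rintro ⟨z₁, F₁⟩ h₁ ⟨z₂, F₂⟩ h₂ heq
    simp only [mem_filter, mem_univ, true_and, Prod.mk.injEq] at h₁ h₂ heq
    obtain ⟨-, hF₁, hzy₁, hz₁, hFy₁, hxz₁⟩ := h₁
    obtain ⟨-, hF₂, hzy₂, hz₂, hFy₂, hxz₂⟩ := h₂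
    obtain ⟨hc, hF'⟩ := heq
    have h₁' := reroot_reaches_ite hF₁.1.1 hz₁ hFy₁ hzy₁ hxz₁
    have h₂' := reroot_reaches_ite hF₂.1.1 hz₂ hFy₂ hzy₂ hxz₂
    rw [← hc, ← hF'] at h₂'
    have hz : z₁ = z₂ := Reaches.pred_unique (reroot_apply_root hzy₁) h₁' h₂' reroot_apply_self
      (hF' ▸ reroot_apply_self) hzy₁ hzy₂
    subst hz
    rw [← unreroot_reroot hz₁ hzy₁, ← unreroot_reroot hz₂ hzy₁, hF', hc]
  · rintro ⟨c, F'⟩ h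
    simp only [mem_filter, mem_univ, true_and] at h
    obtain ⟨hyc, hF', hcy, hF'y, hxy, hor⟩ := h
    obtain ⟨u, hstart, hF'u, huy⟩ := exists_pred_ite hcy hxy hor
    have hc := not_reaches_unreroot hF'u hF'y huy hstart
    refine ⟨(u, update (update F' u u) y c), ?_, by simp [reroot_unreroot hF'u hF'y huy]⟩
    simp only [mem_filter, mem_univ, true_and]
    refine ⟨hF'u ▸ hF'.1.2 u (hF'u ▸ huy.symm), hF'.cut_graft (hF'u ▸ huy.symm) hF'y hc hyc,
      huy, by rw [update_of_ne huy, update_self], by rwa [update_self],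
      reaches_unreroot hF'y huy hxy hstart hc⟩
  · rintro ⟨z, F⟩ h
    simp only [mem_filter, mem_univ, true_and] at h
    exact forestWeight_reroot h.2.2.2.1 h.2.2.2.2.1 h.2.2.1

end Bijections

section ForestIdentities

variable {K : Type*} [Fintype K] [DecidableEq K] {k : K → K → ℝ}

theorem sum_gen_mul_wTo_eq_sub (hk : ∀ x y : K, x ≠ y → 0 ≤ k x y) (x y : K) :
    ∑ z, gen k x z * wTo k z y =
      arcForestSum k (k x) (fun z F => z ≠ x ∧ F y = y ∧ Reaches F z y) -
        arcForestSum k (k x) (fun z F => z ≠ x ∧ F y = y ∧ Reaches F x y) := by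
  rw [sum_gen_mul]
  simp only [mul_sub, sum_sub_distrib]
  rw [sum_mul_wTo k x (fun z hz => hk x z hz.symm), sum_mul_wTo k x (fun z hz => hk x z hz.symm)]

theorem sum_gen_mul_wTo_self (hk : ∀ x y : K, x ≠ y → 0 ≤ k x y) (x : K) :
    ∑ z, gen k x z * wTo k z x = treeWt k x - treeWtTotal k := by
  have hsplit : arcForestSum k (k x) (fun z F => z ≠ x ∧ F x = x ∧ Reaches F x x) =
      arcForestSum k (k x) (fun z F => z ≠ x ∧ F x = x ∧ Reaches F z x) +
        arcForestSum k (k x) (fun z F => z ≠ x ∧ F x = x ∧ ¬ Reaches F z x) :=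
    arcForestSum_eq_add k (fun z F _ _ => by have := Reaches.refl F x; tauto)
      fun z F hQ hR => hR.2.2 hQ.2.2
  rw [sum_gen_mul_wTo_eq_sub hk, hsplit, arcForestSum_graft_sum, treeWtTotal,
    ← add_sum_erase _ _ (mem_univ x)]
  ring

theorem sum_gen_mul_wTo_of_ne (hk : ∀ x y : K, x ≠ y → 0 ≤ k x y) {x y : K} (hxy : x ≠ y) :
    ∑ z, gen k x z * wTo k z y = treeWt k y := by
  have hfirst : arcForestSum k (k x) (fun z F => z ≠ x ∧ F y = y ∧ Reaches F z y) =
      arcForestSum k (k x) (fun z F => z ≠ x ∧ F x = x ∧ rootOf F z = y) +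
        (arcForestSum k (k x)
          (fun z F => z ≠ x ∧ F y = y ∧ F x ≠ x ∧ ¬ Reaches F z x ∧ Reaches F z y) +
        arcForestSum k (k x)
          (fun z F => z ≠ x ∧ F y = y ∧ F x ≠ x ∧ Reaches F z x ∧ Reaches F x y)) := by
    rw [← arcForestSum_eq_add k (fun _ _ _ _ => Iff.rfl) fun z F hQ hR => hQ.2.2.2.1 hR.2.2.2.1]
    refine arcForestSum_eq_add k (fun z F _ hF => ?_)
      fun z F hQ hR => hR.elim (·.2.2.1 hQ.2.1) (·.2.2.1 hQ.2.1)
    rw [IsRooted.rootOf_eq_iff hF.1.1]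
    constructor
    · rintro ⟨hzx, hFy, hzy⟩
      by_cases hFx : F x = x
      · exact Or.inl ⟨hzx, hFx, hFy, hzy⟩
      by_cases hz : Reaches F z x
      · refine Or.inr (Or.inr ⟨hzx, hFy, hFx, hz, ?_⟩)
        exact (hz.total hzy).resolve_right fun hyx => hxy (hyx.eq_of_fixed hFy)
      · exact Or.inr (Or.inl ⟨hzx, hFy, hFx, hz, hzy⟩)
    · rintro (⟨hzx, -, hFy, hzy⟩ | ⟨hzx, hFy, -, -, hzy⟩ | ⟨hzx, hFy, -, hzx', hxy'⟩)
      exacts [⟨hzx, hFy, hzy⟩, ⟨hzx, hFy, hzy⟩, ⟨hzx, hFy, hzx'.trans hxy'⟩]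
  have hsecond : arcForestSum k (k x) (fun z F => z ≠ x ∧ F y = y ∧ Reaches F x y) =
      arcForestSum k (k x)
          (fun z F => z ≠ x ∧ F y = y ∧ F x ≠ x ∧ ¬ Reaches F z x ∧ Reaches F x y) +
        arcForestSum k (k x)
          (fun z F => z ≠ x ∧ F y = y ∧ F x ≠ x ∧ Reaches F z x ∧ Reaches F x y) := by
    refine arcForestSum_eq_add k (fun z F _ _ => ?_) fun z F hQ hR => hQ.2.2.2.1 hR.2.2.2.1
    constructor
    · rintro ⟨hzx, hFy, hxy'⟩
      have hFx : F x ≠ x := fun hFx => hxy (hxy'.eq_of_fixed hFx).symm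
      exact (em (Reaches F z x)).symm.imp (⟨hzx, hFy, hFx, ·, hxy'⟩) (⟨hzx, hFy, hFx, ·, hxy'⟩)
    · rintro (⟨hzx, hFy, -, -, hxy'⟩ | ⟨hzx, hFy, -, -, hxy'⟩) <;> exact ⟨hzx, hFy, hxy'⟩
  rw [sum_gen_mul_wTo_eq_sub hk, hfirst, hsecond, arcForestSum_graft hxy.symm,
    arcForestSum_swap hxy]
  ring

theorem sum_wTo_mul_gen_eq (hk : ∀ x y : K, x ≠ y → 0 ≤ k x y) (x y : K) :
    ∑ z, wTo k x z * gen k z y =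
      arcForestSum k (fun z => k z y) (fun z F => z ≠ y ∧ F z = z ∧ F y = y ∧ Reaches F x z) +
        arcForestSum k (k y)
          (fun c F => c ≠ y ∧ F y = y ∧ Reaches F x y ∧ (x ≠ y ∨ Reaches F c y)) -
        arcForestSum k (k y) (fun c F => c ≠ y ∧ F y = y ∧ Reaches F x y) := by
  rw [sum_mul_gen, sum_sub_distrib, sum_mul_wTo k y (fun z hz => hk z y hz),
    sum_mul_wTo k y (fun z hz => hk y z hz.symm), ← arcForestSum_reroot]
  congr 1
  refine arcForestSum_eq_add k (fun z F _ _ => ?_) fun z F hQ hR => hR.2.2.1 hQ.2.2.1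
  constructor
  · rintro ⟨hzy, hz, hxz⟩
    exact (em (F y = y)).imp (⟨hzy, hz, ·, hxz⟩) (⟨hzy, hz, ·, hxz⟩)
  · rintro (⟨hzy, hz, -, hxz⟩ | ⟨hzy, hz, -, hxz⟩) <;> exact ⟨hzy, hz, hxz⟩

theorem sum_wTo_mul_gen_of_ne (hk : ∀ x y : K, x ≠ y → 0 ≤ k x y) {x y : K} (hxy : x ≠ y) :
    ∑ z, wTo k x z * gen k z y = treeWt k y := by
  rw [sum_wTo_mul_gen_eq hk, arcForestSum_join hxy,
    arcForestSum_congr k (Q := fun c F => c ≠ y ∧ F y = y ∧ Reaches F x y) fun c F _ _ => by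
      simp [hxy]]
  ring

theorem sum_wTo_mul_gen_self (hk : ∀ x y : K, x ≠ y → 0 ≤ k x y) (y : K) :
    ∑ z, wTo k y z * gen k z y = treeWt k y - treeWtTotal k := by
  have hfix : arcForestSum k (fun z => k z y)
      (fun z F => z ≠ y ∧ F z = z ∧ F y = y ∧ Reaches F y z) = 0 :=
    arcForestSum_eq_zero k fun z F _ _ ⟨hzy, _, hFy, hyz⟩ => hzy (hyz.eq_of_fixed hFy)
  have hsplit : arcForestSum k (k y) (fun c F => c ≠ y ∧ F y = y ∧ Reaches F y y) =
      arcForestSum k (k y)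
          (fun c F => c ≠ y ∧ F y = y ∧ Reaches F y y ∧ (y ≠ y ∨ Reaches F c y)) +
        arcForestSum k (k y) (fun c F => c ≠ y ∧ F y = y ∧ ¬ Reaches F c y) :=
    arcForestSum_eq_add k (fun c F _ _ => by have := Reaches.refl F y; tauto)
      fun c F hQ hR => hR.2.2 (hQ.2.2.2.resolve_left (not_not.2 rfl))
  rw [sum_wTo_mul_gen_eq hk, hfix, hsplit, arcForestSum_graft_sum, treeWtTotal,
    ← add_sum_erase _ _ (mem_univ y)]
  ring

theorem sum_wTo (x : K) : ∑ y, wTo k x y = wTwoTotal k := by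
  simp only [wTo, wTwoTotal, sum_filter]
  rw [sum_comm]
  refine sum_congr rfl fun F _ => ?_
  by_cases hF : IsTwoForest k F
  · have hroot : ∀ y, (IsTwoForest k F ∧ F y = y ∧ ∃ n, F^[n] x = y) ↔ rootOf F x = y :=
      fun y => by rw [IsRooted.rootOf_eq_iff hF.1.1]; simp [hF, Reaches]
    rw [if_pos hF, sum_congr rfl fun y _ => if_congr (hroot y) rfl rfl]
    simp
  · simp [hF]

end ForestIdentities

section GeneratorGroupInverse

open Matrix

variable {K : Type*} [Fintype K] [DecidableEq K] {k : K → K → ℝ}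

theorem gen_mul_wTo (hk : ∀ x y : K, x ≠ y → 0 ≤ k x y) :
    gen k * of (wTo k) = vecMulVec 1 (treeWt k) - treeWtTotal k • 1 := by
  ext x y
  rw [mul_apply]
  rcases eq_or_ne x y with rfl | hxy
  · simp [sum_gen_mul_wTo_self hk]
  · simp [sum_gen_mul_wTo_of_ne hk hxy, hxy]

theorem wTo_mul_gen (hk : ∀ x y : K, x ≠ y → 0 ≤ k x y) :
    of (wTo k) * gen k = vecMulVec 1 (treeWt k) - treeWtTotal k • 1 := by
  ext x y
  rw [mul_apply]
  rcases eq_or_ne x y with rfl | hxy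
  · simp [sum_wTo_mul_gen_self hk]
  · simp [sum_wTo_mul_gen_of_ne hk hxy, hxy]

theorem treeWt_eq_smul (hk : ∀ x y : K, x ≠ y → 0 ≤ k x y) {ρ : K → ℝ} (hρsum : ∑ x, ρ x = 1)
    (hρstat : ρ ᵥ* gen k = 0) : treeWt k = treeWtTotal k • ρ := by
  have h := congrArg (ρ ᵥ* ·) (gen_mul_wTo hk)
  simp only [← vecMul_vecMul, hρstat, zero_vecMul, vecMul_sub, vecMul_vecMulVec, vecMul_smul,
    vecMul_one] at h
  rwa [eq_comm, sub_eq_zero, dotProduct_one, hρsum, one_smul] at h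

theorem isGroupInverse_gen (hk : ∀ x y : K, x ≠ y → 0 ≤ k x y) (hirr : StronglyConnected k)
    [Nonempty K] {ρ : K → ℝ} (hρsum : ∑ x, ρ x = 1) (hρstat : ρ ᵥ* gen k = 0) :
    IsGroupInverse (gen k) ((wTwoTotal k / treeWtTotal k) • vecMulVec 1 ρ -
      (treeWtTotal k)⁻¹ • of (wTo k)) := by
  have hW : treeWtTotal k ≠ 0 := (treeWtTotal_pos hirr).ne'
  have hw : vecMulVec 1 (treeWt k) = treeWtTotal k • vecMulVec (1 : K → ℝ) ρ := by
    rw [treeWt_eq_smul hk hρsum hρstat, vecMulVec_smul]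
  have hLP : gen k * vecMulVec (1 : K → ℝ) ρ = 0 := by
    rw [mul_vecMulVec, gen_mulVec_one, zero_vecMulVec]
  have hPL : vecMulVec (1 : K → ℝ) ρ * gen k = 0 := by
    rw [vecMulVec_mul, hρstat, vecMulVec_zero]
  have hTP : of (wTo k) * vecMulVec 1 ρ = wTwoTotal k • vecMulVec (1 : K → ℝ) ρ := by
    rw [mul_vecMulVec, ← smul_vecMulVec]
    congr 1
    ext x
    simp [mulVec, dotProduct, sum_wTo]
  have hPP : vecMulVec 1 ρ * vecMulVec 1 ρ = vecMulVec (1 : K → ℝ) ρ := by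
    rw [vecMulVec_mul_vecMulVec, dotProduct_one, hρsum, one_smul]
  refine isGroupInverse_of_mul_eq_one_sub (p := vecMulVec 1 ρ) ?_ ?_ ?_ hPL
  · rw [mul_sub, mul_smul_comm, mul_smul_comm, hLP, gen_mul_wTo hk, hw, smul_zero, smul_sub,
      smul_smul, smul_smul, inv_mul_cancel₀ hW, one_smul, one_smul]
    abel
  · rw [sub_mul, smul_mul_assoc, smul_mul_assoc, hPL, wTo_mul_gen hk, hw, smul_zero, smul_sub,
      smul_smul, smul_smul, inv_mul_cancel₀ hW, one_smul, one_smul]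
    abel
  · rw [sub_mul, smul_mul_assoc, smul_mul_assoc, hPP, hTP, smul_smul, div_eq_inv_mul, sub_self]

end GeneratorGroupInverse

theorem group_inverse_graphical_representation_general
    {K : Type*} [Fintype K] [DecidableEq K]
    (k : K → K → ℝ) (hk : ∀ x y : K, x ≠ y → 0 ≤ k x y)
    (hirr : StronglyConnected k)
    (ρ : K → ℝ) (hρsum : ∑ x, ρ x = 1)
    (hρstat : Matrix.vecMul ρ (gen k) = 0)
    (X : Matrix K K ℝ)
    (hX1 : gen k * X * gen k = gen k)
    (hX2 : X * gen k * X = X)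
    (hX3 : gen k * X = X * gen k) :
    ∀ x y : K, X x y = -(wTo k x y) / treeWtTotal k +
      ρ y * (wTwoTotal k / treeWtTotal k) := by
  intro x y
  have : Nonempty K := ⟨x⟩
  rw [IsGroupInverse.eq ⟨hX1, hX2, hX3⟩ (isGroupInverse_gen hk hirr hρsum hρstat)]
  simp only [Matrix.sub_apply, Matrix.smul_apply, Matrix.vecMulVec_apply, Matrix.of_apply,
    Pi.one_apply, smul_eq_mul]
  ring

/-- Graphical representation of the group inverse of the backward generator:
`L^#_{x,y} = -w(ℱ^{x→y})/W + ρˢ(y) w(ℱ)/W`. -/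
theorem group_inverse_graphical_representation
    {K : Type*} [Fintype K] [DecidableEq K] [Nontrivial K]
    (k : K → K → ℝ) (hk : ∀ x y : K, x ≠ y → 0 ≤ k x y)
    (hirr : StronglyConnected k)
    (ρ : K → ℝ) (hρpos : ∀ x, 0 < ρ x) (hρsum : ∑ x, ρ x = 1)
    (hρstat : Matrix.vecMul ρ (gen k) = 0)
    (X : Matrix K K ℝ)
    (hX1 : gen k * X * gen k = gen k)
    (hX2 : X * gen k * X = X)
    (hX3 : gen k * X = X * gen k) :
    ∀ x y : K, X x y = -(wTo k x y) / treeWtTotal k +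
      ρ y * (wTwoTotal k / treeWtTotal k) :=
  group_inverse_graphical_representation_general k hk hirr ρ hρsum hρstat X hX1 hX2 hX3
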